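/- arXiv:1811.05811 — 2 statements merged into one kernel-verified Lean document; each statement's English description precedes it below -/
import Mathlib

section
/- Let n, D ∈ ℕ with D ≥ 1 and let k be a real number. Let Γ be a finite simple graph and T a set of vertices of Γ such that the induced subgraph Γ' = Γ \ T is triangle-free. Suppose the maximum degree of Γ is at most D, Γ' has exactly n vertices, and Γ' has at least n/2 + k edges. Then mis(Γ) ≤ 2^{n/2 − k/(100D²) + 2|T|}. -/
/-!
Weight an induced subgraph `G[s]` by the potential `φ(s) = (1/2 + c)|s| - c · ∑_{v ∈ s} deg_s v`,
where `200 c D ≤ 1`. For triangle-free `G[s]` of maximum degree `D` we show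
`mis(G[s]) ≤ 2 ^ φ(s)` by the usual branching on a vertex `v`: either `v` lies in the maximal
independent set, and `N[v]` is deleted, or one of its neighbours does. Deleting `R` lowers `φ` by at
least `49/100 · |R|`, and each branching rule (a vertex of degree `≥ 3`; a vertex of degree `0`; a
pendant vertex; a vertex of degree `2` when the minimum degree is `2`, where triangle-freeness
makes its neighbours non-adjacent) has `∑ (57/80)^|R_i| ≤ 1`. An isolated edge is the exception:
it doubles the count but lowers `φ` by exactly `1`.

For the theorem, a maximal independent set `I` of `Γ` is determined by `A = I ∩ T` together with
a maximal independent set of `Γ'` minus the neighbours of `A`; since `φ` only decreases under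
deletion, `mis(Γ) ≤ 2^|T| · 2^φ(V ∖ T)`, and the degree sum of `Γ'` is twice its number of edges,
at least `n + 2k`, so that `φ(V ∖ T) ≤ n/2 - k/(100D²)` for `c = 1/(200D²)`.
-/

open Finset

noncomputable def misSG {V : Type*} (Γ : SimpleGraph V) : ℕ :=
  Nat.card {I : Set V // (∀ x ∈ I, ∀ y ∈ I, ¬ Γ.Adj x y) ∧
    ∀ J : Set V, (∀ x ∈ J, ∀ y ∈ J, ¬ Γ.Adj x y) → I ⊆ J → I = J}

namespace SimpleGraph

variable {V : Type*} (G : SimpleGraph V) [DecidableRel G.Adj]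

def degreeIn (s : Finset V) (v : V) : ℕ := #{w ∈ s | G.Adj v w}

def degreeSumIn (s : Finset V) : ℕ := ∑ v ∈ s, G.degreeIn s v

noncomputable def potential (c : ℝ) (s : Finset V) : ℝ := (1 / 2 + c) * #s - c * G.degreeSumIn s

section DegreeSums

variable {G}

lemma degreeIn_le_degree [G.LocallyFinite] (s : Finset V) (v : V) :
    G.degreeIn s v ≤ G.degree v := by
  rw [← card_neighborFinset_eq_degree]
  exact card_le_card fun w hw => (mem_neighborFinset _ _ _).2 (mem_filter.1 hw).2

lemma sum_degreeIn_comm (a b : Finset V) :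
    ∑ x ∈ a, G.degreeIn b x = ∑ y ∈ b, G.degreeIn a y := by
  simp only [degreeIn, card_filter]
  rw [sum_comm]
  simp [G.adj_comm]

lemma two_mul_ncard_edges_eq_degreeSumIn [Fintype V] (s : Finset V) :
    2 * {e ∈ G.edgeSet | ∀ v ∈ e, v ∈ s}.ncard = G.degreeSumIn s := by
  classical
  let H : SimpleGraph V :=
    { Adj x y := G.Adj x y ∧ x ∈ s ∧ y ∈ s
      symm := ⟨fun _ _ h => ⟨h.1.symm, h.2.2, h.2.1⟩⟩
      loopless := ⟨fun _ h => G.irrefl h.1⟩ }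
  have hedges : H.edgeSet = {e ∈ G.edgeSet | ∀ v ∈ e, v ∈ s} := by
    ext e
    induction e using Sym2.ind
    simp [H, and_comm]
  have hdeg (v : V) : H.degree v = if v ∈ s then G.degreeIn s v else 0 := by
    rw [← card_neighborFinset_eq_degree, degreeIn]
    split_ifs with hv
    · congr 1
      ext w
      simp [H, hv, and_comm]
    · simp [H, hv, neighborFinset_eq_filter]
  rw [← hedges, Set.ncard_eq_toFinset_card', ← edgeFinset, ← sum_degrees_eq_twice_card_edges]
  simp only [hdeg, sum_ite_mem, univ_inter, degreeSumIn]

lemma potential_le_of_le_degreeSumIn {c m : ℝ} (hc : 0 ≤ c) {s : Finset V}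
    (hm : #s + 2 * m ≤ G.degreeSumIn s) : G.potential c s ≤ #s / 2 - 2 * c * m := by
  rw [potential]
  nlinarith [mul_le_mul_of_nonneg_left hm hc]

end DegreeSums

variable [DecidableEq V]

/-- The maximal independent sets of the subgraph induced on `s`: maximality is encoded as
domination, every vertex of `s` outside `I` having a neighbour in `I`. -/
def maxIndepSetsIn (s : Finset V) : Finset (Finset V) :=
  {I ∈ s.powerset | (∀ x ∈ I, ∀ y ∈ I, ¬ G.Adj x y) ∧ ∀ v ∈ s, v ∉ I → ∃ u ∈ I, G.Adj v u}

def closedNbhdIn (s : Finset V) (v : V) : Finset V := insert v {w ∈ s | G.Adj v w}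

variable {G}

section ClosedNbhdIn

lemma card_closedNbhdIn (s : Finset V) (v : V) :
    #(G.closedNbhdIn s v) = G.degreeIn s v + 1 :=
  card_insert_of_notMem (by simp)

lemma pow_card_closedNbhdIn_le {a : ℝ} (ha₀ : 0 ≤ a) (ha₁ : a ≤ 1) {k : ℕ} (s : Finset V) {v : V}
    (hk : k ≤ G.degreeIn s v) : a ^ #(G.closedNbhdIn s v) ≤ a ^ (k + 1) :=
  pow_le_pow_of_le_one ha₀ ha₁ (by rw [card_closedNbhdIn]; omega)

lemma closedNbhdIn_subset {s : Finset V} {v : V} (hv : v ∈ s) : G.closedNbhdIn s v ⊆ s :=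
  insert_subset hv (filter_subset _ _)

lemma closedNbhdIn_nonempty (s : Finset V) (v : V) : (G.closedNbhdIn s v).Nonempty :=
  insert_nonempty _ _

lemma degreeIn_sdiff_closedNbhdIn (s : Finset V) (v : V) :
    G.degreeIn (s \ G.closedNbhdIn s v) v = 0 := by
  simp only [degreeIn, closedNbhdIn, card_eq_zero, filter_eq_empty_iff, mem_sdiff, mem_insert,
    mem_filter]
  tauto

lemma degreeIn_eq_degreeIn_sdiff_add {s R : Finset V} (hR : R ⊆ s) (v : V) :
    G.degreeIn s v = G.degreeIn (s \ R) v + G.degreeIn R v := by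
  rw [degreeIn, degreeIn, degreeIn, ← card_union_of_disjoint
    (disjoint_filter_filter sdiff_disjoint), ← filter_union, sdiff_union_of_subset hR]

lemma degreeSumIn_eq_degreeSumIn_sdiff_add {s R : Finset V} (hR : R ⊆ s) :
    G.degreeSumIn s = G.degreeSumIn (s \ R) + ∑ x ∈ R, G.degreeIn s x
      + ∑ x ∈ R, G.degreeIn (s \ R) x := by
  rw [degreeSumIn, ← sum_sdiff hR, sum_congr rfl fun x _ => degreeIn_eq_degreeIn_sdiff_add hR x,
    sum_add_distrib, sum_degreeIn_comm (s \ R) R, degreeSumIn]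
  ring

end ClosedNbhdIn

section MaxIndepSets

lemma mem_maxIndepSetsIn {s I : Finset V} :
    I ∈ G.maxIndepSetsIn s ↔ I ⊆ s ∧ (∀ x ∈ I, ∀ y ∈ I, ¬ G.Adj x y) ∧
      ∀ v ∈ s, v ∉ I → ∃ u ∈ I, G.Adj v u := by
  simp [maxIndepSetsIn]

lemma maxIndepSetsIn_empty : G.maxIndepSetsIn ∅ = {∅} := by
  ext I
  simp only [mem_maxIndepSetsIn, subset_empty, notMem_empty, mem_singleton]
  constructor
  · exact fun h => h.1
  · rintro rfl
    simp

lemma sdiff_mem_maxIndepSetsIn {s B I : Finset V} (hI : I ∈ G.maxIndepSetsIn s) :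
    I \ B ∈ G.maxIndepSetsIn {x ∈ s \ B | ∀ a ∈ I ∩ B, ¬ G.Adj a x} := by
  obtain ⟨hIs, hind, hdom⟩ := mem_maxIndepSetsIn.1 hI
  refine mem_maxIndepSetsIn.2 ⟨fun x hx => ?_, fun x hx y hy => ?_, fun x hx hxI => ?_⟩
  · obtain ⟨hxI, hxB⟩ := mem_sdiff.1 hx
    exact mem_filter.2 ⟨mem_sdiff.2 ⟨hIs hxI, hxB⟩, fun a ha => hind a (mem_inter.1 ha).1 x hxI⟩
  · exact hind x (mem_sdiff.1 hx).1 y (mem_sdiff.1 hy).1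
  · obtain ⟨hxsB, hxA⟩ := mem_filter.1 hx
    obtain ⟨hxs, hxB⟩ := mem_sdiff.1 hxsB
    obtain ⟨u, huI, hxu⟩ := hdom x hxs fun h => hxI (mem_sdiff.2 ⟨h, hxB⟩)
    exact ⟨u, mem_sdiff.2 ⟨huI, fun huB => hxA u (mem_inter.2 ⟨huI, huB⟩) hxu.symm⟩, hxu⟩

/-- A maximal independent set `I` is recovered from its trace `A = I ∩ B` and from `I \ B`. -/
lemma card_filter_inter_eq_le (s B A : Finset V) :
    #{I ∈ G.maxIndepSetsIn s | I ∩ B = A}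
      ≤ #(G.maxIndepSetsIn {x ∈ s \ B | ∀ a ∈ A, ¬ G.Adj a x}) := by
  refine card_le_card_of_injOn (· \ B) (fun I hI => ?_) fun I hI J hJ hIJ => ?_
  · obtain ⟨hmis, rfl⟩ := mem_filter.1 (mem_coe.1 hI)
    exact sdiff_mem_maxIndepSetsIn hmis
  · rw [← sdiff_union_inter I B, ← sdiff_union_inter J B, (mem_filter.1 hI).2,
      (mem_filter.1 hJ).2]
    exact congrArg (· ∪ A) hIJ

lemma card_maxIndepSetsIn_le_sum (s B : Finset V) :
    #(G.maxIndepSetsIn s)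
      ≤ ∑ A ∈ B.powerset, #(G.maxIndepSetsIn {x ∈ s \ B | ∀ a ∈ A, ¬ G.Adj a x}) := by
  rw [card_eq_sum_card_fiberwise (f := (· ∩ B)) fun I _ =>
    mem_coe.2 (mem_powerset.2 inter_subset_right)]
  exact sum_le_sum fun A _ => card_filter_inter_eq_le s B A

lemma card_filter_notMem_le (s : Finset V) (v : V) :
    #{I ∈ G.maxIndepSetsIn s | v ∉ I} ≤ #(G.maxIndepSetsIn (s \ {v})) := by
  calc #{I ∈ G.maxIndepSetsIn s | v ∉ I}
      ≤ #{I ∈ G.maxIndepSetsIn s | I ∩ {v} = ∅} :=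
        card_le_card (monotone_filter_right _ fun I _ (h : v ∉ I) => inter_singleton_of_notMem h)
    _ ≤ _ := card_filter_inter_eq_le s {v} ∅
    _ = _ := by simp

lemma card_filter_mem_le (s : Finset V) (v : V) :
    #{I ∈ G.maxIndepSetsIn s | v ∈ I} ≤ #(G.maxIndepSetsIn (s \ G.closedNbhdIn s v)) := by
  calc #{I ∈ G.maxIndepSetsIn s | v ∈ I}
      ≤ #{I ∈ G.maxIndepSetsIn s | I ∩ {v} = {v}} :=
        card_le_card (monotone_filter_right _ fun I _ (h : v ∈ I) => inter_singleton_of_mem h)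
    _ ≤ _ := card_filter_inter_eq_le s {v} {v}
    _ = _ := by
        congr 2
        ext x
        simp only [closedNbhdIn, mem_filter, mem_sdiff, mem_insert, mem_singleton,
          forall_eq]
        tauto

lemma card_filter_mem_notMem_le (s : Finset V) (v u : V) :
    #{I ∈ G.maxIndepSetsIn s | v ∈ I ∧ u ∉ I}
      ≤ #(G.maxIndepSetsIn (s \ insert u (G.closedNbhdIn s v))) := by
  calc #{I ∈ G.maxIndepSetsIn s | v ∈ I ∧ u ∉ I}
      ≤ #{I ∈ G.maxIndepSetsIn s | I ∩ {v, u} = {v}} := by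
        refine card_le_card (monotone_filter_right _ fun I _ (h : v ∈ I ∧ u ∉ I) => ?_)
        ext x
        simp only [mem_inter, mem_insert, mem_singleton]
        grind
    _ ≤ _ := card_filter_inter_eq_le s {v, u} {v}
    _ = _ := by
        congr 2
        ext x
        simp only [closedNbhdIn, mem_filter, mem_sdiff, mem_insert, mem_singleton,
          forall_eq]
        tauto

lemma card_maxIndepSetsIn_le_add (s : Finset V) (v : V) :
    #(G.maxIndepSetsIn s)
      ≤ #(G.maxIndepSetsIn (s \ {v})) + #(G.maxIndepSetsIn (s \ G.closedNbhdIn s v)) := by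
  rw [← card_filter_add_card_filter_not (fun I => v ∉ I)]
  simp only [not_not]
  exact add_le_add (card_filter_notMem_le s v) (card_filter_mem_le s v)

lemma exists_adj_mem_of_notMem {s I : Finset V} {v : V} (hI : I ∈ G.maxIndepSetsIn s)
    (hv : v ∈ s) (hvI : v ∉ I) : ∃ u ∈ {w ∈ s | G.Adj v w}, u ∈ I := by
  obtain ⟨hIs, -, hdom⟩ := mem_maxIndepSetsIn.1 hI
  obtain ⟨u, huI, hvu⟩ := hdom v hv hvI
  exact ⟨u, mem_filter.2 ⟨hIs huI, hvu⟩, huI⟩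

lemma card_maxIndepSetsIn_le_of_neighbors_eq_empty {s : Finset V} {v : V} (hv : v ∈ s)
    (hN : {w ∈ s | G.Adj v w} = ∅) :
    #(G.maxIndepSetsIn s) ≤ #(G.maxIndepSetsIn (s \ G.closedNbhdIn s v)) := by
  refine le_of_eq_of_le ?_ (card_filter_mem_le s v)
  rw [filter_true_of_mem fun I hI => ?_]
  by_contra hvI
  obtain ⟨u, hu, -⟩ := exists_adj_mem_of_notMem hI hv hvI
  simp [hN] at hu

lemma card_maxIndepSetsIn_le_of_neighbors_eq_singleton {s : Finset V} {v u : V} (hv : v ∈ s)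
    (hN : {w ∈ s | G.Adj v w} = {u}) :
    #(G.maxIndepSetsIn s) ≤ #(G.maxIndepSetsIn (s \ G.closedNbhdIn s v))
      + #(G.maxIndepSetsIn (s \ G.closedNbhdIn s u)) := by
  calc #(G.maxIndepSetsIn s) = #{I ∈ G.maxIndepSetsIn s | v ∈ I ∨ u ∈ I} := by
        rw [filter_true_of_mem fun I hI => ?_]
        by_contra! h
        obtain ⟨x, hx, hxI⟩ := exists_adj_mem_of_notMem hI hv h.1
        rw [hN, mem_singleton] at hx
        exact h.2 (hx ▸ hxI)
    _ ≤ _ := by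
        rw [filter_or]
        exact (card_union_le _ _).trans
          (add_le_add (card_filter_mem_le s v) (card_filter_mem_le s u))

lemma card_maxIndepSetsIn_le_of_neighbors_eq_pair {s : Finset V} {v u w : V} (hv : v ∈ s)
    (hN : {x ∈ s | G.Adj v x} = {u, w}) :
    #(G.maxIndepSetsIn s) ≤ #(G.maxIndepSetsIn (s \ G.closedNbhdIn s v))
      + #(G.maxIndepSetsIn (s \ G.closedNbhdIn s u))
      + #(G.maxIndepSetsIn (s \ insert u (G.closedNbhdIn s w))) := by
  calc #(G.maxIndepSetsIn s)
      = #{I ∈ G.maxIndepSetsIn s | (v ∈ I ∨ u ∈ I) ∨ (w ∈ I ∧ u ∉ I)} := by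
        rw [filter_true_of_mem fun I hI => ?_]
        by_contra! h
        obtain ⟨x, hx, hxI⟩ := exists_adj_mem_of_notMem hI hv h.1.1
        rw [hN, mem_insert, mem_singleton] at hx
        obtain rfl | rfl := hx
        · exact h.1.2 hxI
        · exact h.1.2 (h.2 hxI)
    _ ≤ _ := by
        rw [filter_or, filter_or]
        refine (card_union_le _ _).trans (add_le_add ((card_union_le _ _).trans ?_) ?_)
        · exact add_le_add (card_filter_mem_le s v) (card_filter_mem_le s u)
        · exact card_filter_mem_notMem_le s w u

end MaxIndepSets

section Potential

variable {c : ℝ} {D : ℕ}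

lemma potential_sdiff {s R : Finset V} (hR : R ⊆ s) :
    G.potential c (s \ R) = G.potential c s - (1 / 2 + c) * #R
      + c * (∑ x ∈ R, G.degreeIn s x + ∑ x ∈ R, G.degreeIn (s \ R) x) := by
  simp only [potential]
  rw [degreeSumIn_eq_degreeSumIn_sdiff_add hR, card_sdiff_of_subset hR,
    Nat.cast_sub (card_le_card hR)]
  push_cast
  ring

/-- The degree sum drops by at most `2D|R|`, which costs at most `|R|/100`. -/
lemma potential_sdiff_le [G.LocallyFinite] (hc : 0 ≤ c) (hcD : 200 * c * D ≤ 1)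
    (hdeg : ∀ v, G.degree v ≤ D) {s R : Finset V} (hR : R ⊆ s) :
    G.potential c (s \ R) ≤ G.potential c s - 49 / 100 * #R := by
  have hsum (t : Finset V) : ((∑ x ∈ R, G.degreeIn t x : ℕ) : ℝ) ≤ #R * D := by
    have h := sum_le_card_nsmul R _ D fun x _ => (degreeIn_le_degree t x).trans (hdeg x)
    rw [smul_eq_mul] at h
    exact_mod_cast h
  have hR0 : (0 : ℝ) ≤ #R := Nat.cast_nonneg _
  rw [potential_sdiff hR]
  linarith [mul_le_mul_of_nonneg_left (add_le_add (hsum s) (hsum (s \ R))) hc,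
    mul_le_mul_of_nonneg_right hcD hR0, mul_nonneg hc hR0]

lemma potential_mono [G.LocallyFinite] (hc : 0 ≤ c) (hcD : 200 * c * D ≤ 1)
    (hdeg : ∀ v, G.degree v ≤ D) {s t : Finset V} (hts : t ⊆ s) :
    G.potential c t ≤ G.potential c s := by
  have h := potential_sdiff_le hc hcD hdeg (sdiff_subset : s \ t ⊆ s)
  rw [Finset.sdiff_sdiff_eq_self hts] at h
  linarith [(Nat.cast_nonneg _ : (0 : ℝ) ≤ #(s \ t))]

lemma two_rpow_neg_le : (2 : ℝ) ^ (-(49 / 100 : ℝ)) ≤ 57 / 80 := by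
  refine le_of_pow_le_pow_left₀ (n := 100) (by norm_num) (by norm_num) ?_
  rw [← Real.rpow_natCast, ← Real.rpow_mul (by norm_num)]
  norm_num

lemma two_rpow_potential_sdiff_le [G.LocallyFinite] (hc : 0 ≤ c) (hcD : 200 * c * D ≤ 1)
    (hdeg : ∀ v, G.degree v ≤ D) {s R : Finset V} (hR : R ⊆ s) :
    (2 : ℝ) ^ G.potential c (s \ R) ≤ 2 ^ G.potential c s * (57 / 80) ^ #R :=
  calc (2 : ℝ) ^ G.potential c (s \ R)
      ≤ 2 ^ (G.potential c s - 49 / 100 * #R) :=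
        Real.rpow_le_rpow_of_exponent_le one_le_two (potential_sdiff_le hc hcD hdeg hR)
    _ = 2 ^ G.potential c s * ((2 : ℝ) ^ (-(49 / 100 : ℝ))) ^ #R := by
        rw [Real.rpow_sub two_pos, ← Real.rpow_natCast, ← Real.rpow_mul zero_le_two,
          div_eq_mul_inv, ← Real.rpow_neg zero_le_two]
        ring_nf
    _ ≤ 2 ^ G.potential c s * (57 / 80) ^ #R := by
        gcongr
        exact two_rpow_neg_le

end Potential

section Branching

variable {c : ℝ} {s : Finset V}
  (hbranch : ∀ R ⊆ s, R.Nonempty →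
    (#(G.maxIndepSetsIn (s \ R)) : ℝ) ≤ 2 ^ G.potential c s * (57 / 80) ^ #R)
include hbranch

lemma card_maxIndepSetsIn_le_of_branching (L : List (Finset V)) (hL : ∀ R ∈ L, R ⊆ s ∧ R.Nonempty)
    (hsplit : #(G.maxIndepSetsIn s) ≤ (L.map fun R => #(G.maxIndepSetsIn (s \ R))).sum)
    (hweight : (L.map fun R => (57 / 80 : ℝ) ^ #R).sum ≤ 1) :
    (#(G.maxIndepSetsIn s) : ℝ) ≤ 2 ^ G.potential c s :=
  calc (#(G.maxIndepSetsIn s) : ℝ)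
      ≤ (L.map fun R => (#(G.maxIndepSetsIn (s \ R)) : ℝ)).sum := by
        have h := (Nat.cast_le (α := ℝ)).2 hsplit
        rwa [Nat.cast_list_sum, List.map_map] at h
    _ ≤ (L.map fun R => 2 ^ G.potential c s * (57 / 80 : ℝ) ^ #R).sum :=
        List.sum_le_sum fun R hR => hbranch R (hL R hR).1 (hL R hR).2
    _ = 2 ^ G.potential c s * (L.map fun R => (57 / 80 : ℝ) ^ #R).sum := List.sum_map_mul_left ..
    _ ≤ 2 ^ G.potential c s := mul_le_of_le_one_right (by positivity) hweight

lemma card_maxIndepSetsIn_le_of_three_le_degreeIn {v : V} (hv : v ∈ s)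
    (h3 : 3 ≤ G.degreeIn s v) : (#(G.maxIndepSetsIn s) : ℝ) ≤ 2 ^ G.potential c s := by
  refine card_maxIndepSetsIn_le_of_branching hbranch [{v}, G.closedNbhdIn s v] ?_ ?_ ?_
  · simp [hv, closedNbhdIn_subset hv, closedNbhdIn_nonempty]
  · simpa using card_maxIndepSetsIn_le_add s v
  · have h := pow_card_closedNbhdIn_le (a := 57 / 80) (by norm_num) (by norm_num) s h3
    norm_num at h ⊢
    linarith

lemma card_maxIndepSetsIn_le_of_degreeIn_eq_zero {v : V} (hv : v ∈ s)
    (h0 : G.degreeIn s v = 0) : (#(G.maxIndepSetsIn s) : ℝ) ≤ 2 ^ G.potential c s := by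
  refine card_maxIndepSetsIn_le_of_branching hbranch [G.closedNbhdIn s v] ?_ ?_ ?_
  · simp [closedNbhdIn_subset hv, closedNbhdIn_nonempty]
  · simpa using card_maxIndepSetsIn_le_of_neighbors_eq_empty hv (card_eq_zero.1 h0)
  · norm_num [card_closedNbhdIn, h0]

lemma card_maxIndepSetsIn_le_of_pendant {v u : V} (hv : v ∈ s)
    (hN : {w ∈ s | G.Adj v w} = {u}) (hu : 2 ≤ G.degreeIn s u) :
    (#(G.maxIndepSetsIn s) : ℝ) ≤ 2 ^ G.potential c s := by
  have hus : u ∈ s := (mem_filter.1 (hN ▸ mem_singleton_self u)).1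
  have hv1 : G.degreeIn s v = 1 := by rw [degreeIn, hN, card_singleton]
  refine card_maxIndepSetsIn_le_of_branching hbranch
    [G.closedNbhdIn s v, G.closedNbhdIn s u] ?_ ?_ ?_
  · simp [closedNbhdIn_subset hv, closedNbhdIn_subset hus, closedNbhdIn_nonempty]
  · simpa using card_maxIndepSetsIn_le_of_neighbors_eq_singleton hv hN
  · have h := pow_card_closedNbhdIn_le (a := 57 / 80) (by norm_num) (by norm_num) s hu
    norm_num [card_closedNbhdIn, hv1] at h ⊢
    linarith

lemma card_maxIndepSetsIn_le_of_degreeIn_eq_two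
    (htri : ∀ x ∈ s, ∀ y ∈ s, ∀ z ∈ s, G.Adj x y → G.Adj y z → G.Adj x z → False)
    (hmin : ∀ x ∈ s, 2 ≤ G.degreeIn s x) {v : V} (hv : v ∈ s) (h2 : G.degreeIn s v = 2) :
    (#(G.maxIndepSetsIn s) : ℝ) ≤ 2 ^ G.potential c s := by
  obtain ⟨u, w, huw, hN⟩ := card_eq_two.1 h2
  obtain ⟨hus, hvu⟩ := mem_filter.1 (hN ▸ mem_insert_self u {w})
  obtain ⟨hws, hvw⟩ := mem_filter.1 (hN ▸ mem_insert_of_mem (mem_singleton_self w))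
  have hu : u ∉ G.closedNbhdIn s w := by
    simp only [closedNbhdIn, mem_insert, mem_filter, not_or]
    exact ⟨huw, fun h => htri u hus v hv w hws hvu.symm hvw h.2.symm⟩
  have hR : insert u (G.closedNbhdIn s w) ⊆ s := insert_subset hus (closedNbhdIn_subset hws)
  refine card_maxIndepSetsIn_le_of_branching hbranch
    [G.closedNbhdIn s v, G.closedNbhdIn s u, insert u (G.closedNbhdIn s w)] ?_ ?_ ?_
  · simp [closedNbhdIn_subset hv, closedNbhdIn_subset hus, closedNbhdIn_nonempty, hR]
  · simpa [add_assoc] using card_maxIndepSetsIn_le_of_neighbors_eq_pair hv hN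
  · have hu3 := pow_card_closedNbhdIn_le (a := 57 / 80) (by norm_num) (by norm_num) s
      (hmin u hus)
    have hw4 := pow_card_closedNbhdIn_le (a := 57 / 80) (by norm_num) (by norm_num) s
      (hmin w hws)
    norm_num [card_closedNbhdIn, h2, card_insert_of_notMem hu, pow_succ] at hu3 hw4 ⊢
    nlinarith

end Branching

lemma card_maxIndepSetsIn_le_of_isolated_edge {c : ℝ} {s : Finset V}
    (hIH : ∀ t ⊂ s, (#(G.maxIndepSetsIn t) : ℝ) ≤ 2 ^ G.potential c t) {v u : V} (hv : v ∈ s)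
    (hvu : {w ∈ s | G.Adj v w} = {u}) (huv : {w ∈ s | G.Adj u w} = {v}) :
    (#(G.maxIndepSetsIn s) : ℝ) ≤ 2 ^ G.potential c s := by
  have hadj : G.Adj v u := (mem_filter.1 (hvu ▸ mem_singleton_self u)).2
  have hN : G.closedNbhdIn s u = G.closedNbhdIn s v := by
    rw [closedNbhdIn, closedNbhdIn, hvu, huv, pair_comm]
  have hR : G.closedNbhdIn s v = {v, u} := by rw [closedNbhdIn, hvu]
  have hRs := closedNbhdIn_subset (G := G) hv
  have hpot : G.potential c (s \ G.closedNbhdIn s v) = G.potential c s - 1 := by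
    have hdeg : ∑ x ∈ G.closedNbhdIn s v, G.degreeIn s x = 2 := by
      rw [hR, sum_pair hadj.ne, degreeIn, degreeIn, hvu, huv, card_singleton, card_singleton]
    have hdeg' : ∑ x ∈ G.closedNbhdIn s v, G.degreeIn (s \ G.closedNbhdIn s v) x = 0 := by
      refine sum_eq_zero fun x hx => ?_
      rw [hR, mem_insert, mem_singleton] at hx
      obtain rfl | rfl := hx
      · exact degreeIn_sdiff_closedNbhdIn s x
      · rw [← hN]
        exact degreeIn_sdiff_closedNbhdIn s x
    rw [potential_sdiff hRs, hdeg, hdeg', hR, card_pair hadj.ne]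
    push_cast
    ring
  have hsplit := card_maxIndepSetsIn_le_of_neighbors_eq_singleton hv hvu
  rw [hN] at hsplit
  calc (#(G.maxIndepSetsIn s) : ℝ) ≤ 2 * #(G.maxIndepSetsIn (s \ G.closedNbhdIn s v)) := by
        exact_mod_cast hsplit.trans_eq (two_mul _).symm
    _ ≤ 2 * 2 ^ (G.potential c s - 1) := by
        rw [← hpot]
        gcongr
        exact hIH _ (sdiff_ssubset hRs (closedNbhdIn_nonempty s v))
    _ = 2 ^ G.potential c s := by
        rw [Real.rpow_sub_one two_ne_zero]
        ring

theorem card_maxIndepSetsIn_le_two_rpow_potential [G.LocallyFinite] {c : ℝ} {D : ℕ}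
    (hc : 0 ≤ c) (hcD : 200 * c * D ≤ 1) (hdeg : ∀ v, G.degree v ≤ D) (s : Finset V)
    (htri : ∀ x ∈ s, ∀ y ∈ s, ∀ z ∈ s, G.Adj x y → G.Adj y z → G.Adj x z → False) :
    (#(G.maxIndepSetsIn s) : ℝ) ≤ 2 ^ G.potential c s := by
  induction s using Finset.strongInduction with
  | H s ih =>
  have hIH : ∀ t ⊂ s, (#(G.maxIndepSetsIn t) : ℝ) ≤ 2 ^ G.potential c t := fun t hts =>
    ih t hts fun x hx y hy z hz => htri x (hts.1 hx) y (hts.1 hy) z (hts.1 hz)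
  have hbranch : ∀ R ⊆ s, R.Nonempty →
      (#(G.maxIndepSetsIn (s \ R)) : ℝ) ≤ 2 ^ G.potential c s * (57 / 80) ^ #R :=
    fun R hR hne =>
      (hIH _ (sdiff_ssubset hR hne)).trans (two_rpow_potential_sdiff_le hc hcD hdeg hR)
  obtain rfl | ⟨v₀, hv₀⟩ := s.eq_empty_or_nonempty
  · simp [maxIndepSetsIn_empty, potential, degreeSumIn]
  by_cases h3 : ∃ v ∈ s, 3 ≤ G.degreeIn s v
  · obtain ⟨v, hv, h3⟩ := h3
    exact card_maxIndepSetsIn_le_of_three_le_degreeIn hbranch hv h3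
  by_cases h0 : ∃ v ∈ s, G.degreeIn s v = 0
  · obtain ⟨v, hv, h0⟩ := h0
    exact card_maxIndepSetsIn_le_of_degreeIn_eq_zero hbranch hv h0
  by_cases h1 : ∃ v ∈ s, G.degreeIn s v = 1
  · obtain ⟨v, hv, h1⟩ := h1
    obtain ⟨u, hvu⟩ := card_eq_one.1 h1
    have hvN : v ∈ {w ∈ s | G.Adj u w} :=
      mem_filter.2 ⟨hv, (mem_filter.1 (hvu ▸ mem_singleton_self u)).2.symm⟩
    by_cases hu1 : G.degreeIn s u = 1
    · have huv : {w ∈ s | G.Adj u w} = {v} :=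
        eq_singleton_iff_unique_mem.2 ⟨hvN, fun x hx => card_le_one.1 hu1.le x hx v hvN⟩
      exact card_maxIndepSetsIn_le_of_isolated_edge hIH hv hvu huv
    · have hu0 : 0 < G.degreeIn s u := card_pos.2 ⟨v, hvN⟩
      exact card_maxIndepSetsIn_le_of_pendant hbranch hv hvu (by omega)
  push Not at h3 h0 h1
  have hmin (x : V) (hx : x ∈ s) : 2 ≤ G.degreeIn s x := by
    have := h0 x hx
    have := h1 x hx
    omega
  have h2 : G.degreeIn s v₀ = 2 := le_antisymm (Nat.le_of_lt_succ (h3 v₀ hv₀)) (hmin v₀ hv₀)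
  exact card_maxIndepSetsIn_le_of_degreeIn_eq_two hbranch htri hmin hv₀ h2

end SimpleGraph

lemma misSG_le_card_maxIndepSetsIn_univ {V : Type*} [Fintype V] [DecidableEq V]
    (G : SimpleGraph V) [DecidableRel G.Adj] : misSG G ≤ #(G.maxIndepSetsIn univ) := by
  classical
  refine (Nat.card_le_card_of_injective (fun I => (⟨I.1.toFinset, ?_⟩ : G.maxIndepSetsIn univ))
    fun I J h => Subtype.ext (by simpa using congrArg Subtype.val h)).trans_eq
    (Nat.card_eq_finsetCard _)
  obtain ⟨I, hind, hmax⟩ := I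
  refine SimpleGraph.mem_maxIndepSetsIn.2 ⟨subset_univ _, by simpa using hind, fun v _ hvI => ?_⟩
  by_contra! hv
  simp only [Set.mem_toFinset] at hvI hv
  have hins : ∀ x ∈ insert v I, ∀ y ∈ insert v I, ¬ G.Adj x y := by
    simp only [Set.mem_insert_iff, forall_eq_or_imp]
    exact ⟨⟨G.irrefl, hv⟩, fun x hx => ⟨fun h => hv x hx h.symm, hind x hx⟩⟩
  exact hvI (hmax _ hins (Set.subset_insert v I) ▸ Set.mem_insert v I)

open SimpleGraph in
theorem misSG_le_two_pow_card_mul_two_rpow_potential {V : Type*} [Fintype V] [DecidableEq V]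
    (G : SimpleGraph V) [DecidableRel G.Adj] {c : ℝ} {D : ℕ} (hc : 0 ≤ c)
    (hcD : 200 * c * D ≤ 1) (hdeg : ∀ v, G.degree v ≤ D) (T : Finset V)
    (htri : ∀ x y z : V, x ∉ T → y ∉ T → z ∉ T → G.Adj x y → G.Adj y z → G.Adj x z → False) :
    (misSG G : ℝ) ≤ 2 ^ #T * 2 ^ G.potential c Tᶜ := by
  have hterm (t : Finset V) (ht : t ⊆ Tᶜ) :
      (#(G.maxIndepSetsIn t) : ℝ) ≤ 2 ^ G.potential c Tᶜ := by
    have hT (x : V) (hx : x ∈ t) : x ∉ T := mem_compl.1 (ht hx)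
    exact (card_maxIndepSetsIn_le_two_rpow_potential hc hcD hdeg t
      fun x hx y hy z hz => htri x y z (hT x hx) (hT y hy) (hT z hz)).trans
      (Real.rpow_le_rpow_of_exponent_le one_le_two (potential_mono hc hcD hdeg ht))
  have hsplit := (misSG_le_card_maxIndepSetsIn_univ G).trans (card_maxIndepSetsIn_le_sum univ T)
  rw [← compl_eq_univ_sdiff] at hsplit
  calc (misSG G : ℝ) ≤ ∑ A ∈ T.powerset, (2 : ℝ) ^ G.potential c Tᶜ := by
        refine (Nat.cast_le.2 hsplit).trans ?_
        push_cast
        -- `(_)`: with `Fintype V` in scope, synthesizing the filter's decidability instance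
        -- would find one different from the instance in `hsplit`
        exact sum_le_sum fun A _ => hterm _ (@filter_subset _ _ (_) _)
    _ = 2 ^ #T * 2 ^ G.potential c Tᶜ := by
        rw [sum_const, card_powerset, nsmul_eq_mul]
        push_cast
        ring

theorem mis_of_almost_triangle_free_graph_general
    (n D : ℕ) (k : ℝ)
    (V : Type) [Fintype V] [DecidableEq V]
    (Γ : SimpleGraph V) [DecidableRel Γ.Adj] (T : Set V)
    (htri : ∀ x y z : V, x ∉ T → y ∉ T → z ∉ T →
      Γ.Adj x y → Γ.Adj y z → Γ.Adj x z → False)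
    (hΔ : Γ.maxDegree ≤ D)
    (hn : n = Tᶜ.ncard)
    (hedges : (n : ℝ) / 2 + k ≤ ({e ∈ Γ.edgeSet | ∀ v ∈ e, v ∉ T}.ncard : ℝ)) :
    (misSG Γ : ℝ) ≤ 2 ^ ((n : ℝ) / 2 - k / (100 * (D : ℝ) ^ 2) + 2 * T.ncard) := by
  classical
  set c : ℝ := 1 / (200 * (D : ℝ) ^ 2) with hc_def
  have hcD : 200 * c * D ≤ 1 := by
    rcases Nat.eq_zero_or_pos D with rfl | hD
    · simp
    · calc 200 * c * D = 1 / D := by rw [hc_def]; field_simp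
        _ ≤ 1 := div_le_one_of_le₀ (by exact_mod_cast hD) (by positivity)
  have hmis := misSG_le_two_pow_card_mul_two_rpow_potential Γ (by positivity) hcD
    (fun v => (Γ.degree_le_maxDegree v).trans hΔ) T.toFinset (by simpa using htri)
  have hcard : #T.toFinsetᶜ = n := by rw [hn, Set.ncard_eq_toFinset_card', Set.toFinset_compl]
  have hdsum : 2 * {e ∈ Γ.edgeSet | ∀ v ∈ e, v ∉ T}.ncard = Γ.degreeSumIn T.toFinsetᶜ := by
    simpa using Γ.two_mul_ncard_edges_eq_degreeSumIn T.toFinsetᶜ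
  have hpot := Γ.potential_le_of_le_degreeSumIn (s := T.toFinsetᶜ) (c := c) (m := k)
    (by positivity) (by rw [← hdsum, hcard]; push_cast; linarith)
  have h2c : 2 * c * k = k / (100 * (D : ℝ) ^ 2) := by rw [hc_def]; ring
  rw [hcard, h2c] at hpot
  calc (misSG Γ : ℝ) ≤ 2 ^ #T.toFinset * 2 ^ Γ.potential c T.toFinsetᶜ := hmis
    _ = 2 ^ (Γ.potential c T.toFinsetᶜ + T.ncard) := by
        rw [Real.rpow_add two_pos, Set.ncard_eq_toFinset_card', Real.rpow_natCast, mul_comm]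
    _ ≤ 2 ^ ((n : ℝ) / 2 - k / (100 * (D : ℝ) ^ 2) + 2 * T.ncard) := by
        gcongr
        · exact one_le_two
        · linarith [(Nat.cast_nonneg _ : (0 : ℝ) ≤ T.ncard)]

/-- Bound on the number of maximal independent sets of an almost triangle-free
graph: if `Γ \ T` is triangle-free with `n` vertices and at least `n/2 + k` edges,
and `Δ(Γ) ≤ D`, then `mis(Γ) ≤ 2^{n/2 − k/(100D²) + 2|T|}`. -/
theorem mis_of_almost_triangle_free_graph
    (n D : ℕ) (hD : 1 ≤ D) (k : ℝ)
    (V : Type) [Fintype V] [DecidableEq V]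
    (Γ : SimpleGraph V) [DecidableRel Γ.Adj] (T : Set V)
    (htri : ∀ x y z : V, x ∉ T → y ∉ T → z ∉ T →
      Γ.Adj x y → Γ.Adj y z → Γ.Adj x z → False)
    (hΔ : Γ.maxDegree ≤ D)
    (hn : n = Tᶜ.ncard)
    (hedges : (n : ℝ) / 2 + k ≤ ({e ∈ Γ.edgeSet | ∀ v ∈ e, v ∉ T}.ncard : ℝ)) :
    (misSG Γ : ℝ) ≤ 2 ^ ((n : ℝ) / 2 - k / (100 * (D : ℝ) ^ 2) + 2 * T.ncard) :=
  mis_of_almost_triangle_free_graph_general n D k V Γ T htri hΔ hn hedges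
end

section
/- Let G be a finite abelian group and let B, S ⊆ G both be sum-free sets with S ∩ B = ∅. If I ⊆ B is such that S ∪ I is a maximal sum-free subset of G, then I is a maximal independent set of the link graph L_S[B]. -/
open Pointwise

/-- A subset `A` of an additive group is *sum-free* if there are no
`x, y, z ∈ A` (not necessarily distinct) with `x + y = z`. -/
def IsSumFree {G : Type*} [AddCommGroup G] (A : Set G) : Prop :=
  ∀ x ∈ A, ∀ y ∈ A, x + y ∉ A

/-- `I` is an independent set of the link graph `L_S[B]`: a subset of `B` containing
no looped vertex (a vertex `x` with `x + x ∈ S` or `x ∈ (S + S) ∪ (S - S)`) and no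
pair of distinct adjacent vertices (`x, y` with `x + y ∈ S` or `x - y ∈ S ∪ (−S)`). -/
def LinkIndep {G : Type*} [AddCommGroup G] (S B I : Set G) : Prop :=
  I ⊆ B ∧ (∀ x ∈ I, ¬(x + x ∈ S ∨ x ∈ (S + S) ∪ (S - S))) ∧
    ∀ x ∈ I, ∀ y ∈ I, x ≠ y → ¬(x + y ∈ S ∨ x - y ∈ S ∪ -S)

/-- If `B, S` are disjoint sum-free subsets of a finite abelian group `G` and
`I ⊆ B` is such that `S ∪ I` is a maximal sum-free subset of `G`, then `I` is a
maximal independent set of the link graph `L_S[B]`. -/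
theorem maximal_sumfree_extension_is_maximal_independent
    {G : Type*} [AddCommGroup G] [Fintype G]
    (B S : Set G) (hB : IsSumFree B) (hS : IsSumFree S) (hdisj : S ∩ B = ∅)
    (I : Set G) (hIB : I ⊆ B)
    (hSF : IsSumFree (S ∪ I))
    (hmax : ∀ A : Set G, IsSumFree A → S ∪ I ⊆ A → S ∪ I = A) :
    LinkIndep S B I ∧ ∀ J : Set G, LinkIndep S B J → I ⊆ J → I = J := by
  have hS0 : (0:G) ∉ S := fun h => hS 0 h 0 h (by simpa using h)
  have hB0 : (0:G) ∉ B := fun h => hB 0 h 0 h (by simpa using h)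
  constructor
  · refine ⟨hIB, ?_, ?_⟩
    · rintro x hx (h | h | h)
      · exact hSF x (Or.inr hx) x (Or.inr hx) (Or.inl h)
      · obtain ⟨a, ha, b, hb, rfl⟩ := h
        exact hSF a (Or.inl ha) b (Or.inl hb) (Or.inr hx)
      · obtain ⟨a, ha, b, hb, rfl⟩ := h
        exact hSF b (Or.inl hb) (a - b) (Or.inr hx)
          (by rw [show b + (a - b) = a from by abel]; exact Or.inl ha)
    · rintro x hx y hy hne (h | h | h)
      · exact hSF x (Or.inr hx) y (Or.inr hy) (Or.inl h)
      · exact hSF y (Or.inr hy) (x - y) (Or.inl h)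
          (by rw [show y + (x - y) = x from by abel]; exact Or.inr hx)
      · rw [Set.mem_neg] at h
        have h' : y - x ∈ S := by simpa using h
        exact hSF x (Or.inr hx) (y - x) (Or.inl h')
          (by rw [show x + (y - x) = y from by abel]; exact Or.inr hy)
  · intro J hJ hIJ
    by_contra hne
    obtain ⟨g, hgJ, hgI⟩ := Set.not_subset.mp
      (fun h => hne (Set.Subset.antisymm hIJ h))
    obtain ⟨hJB, hloop, hadj⟩ := hJ
    have hgB : g ∈ B := hJB hgJ
    have hgS : g ∉ S := fun h =>
      Set.eq_empty_iff_forall_notMem.mp hdisj g ⟨h, hgB⟩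
    have hg0 : g ≠ 0 := fun h => hB0 (h ▸ hgB)
    have hA : IsSumFree (insert g (S ∪ I)) := by
      intro x hx y hy hz
      rw [Set.mem_insert_iff] at hx hy hz
      -- helper for the case x ∈ S ∪ I, y = g (and symmetric)
      have key : ∀ w, w ∈ S ∪ I → ¬ (g + w = g ∨ g + w ∈ S ∪ I) := by
        rintro w (hw | hw) h
        · -- w ∈ S
          rcases h with h | h | h
          · exact hS0 (add_eq_left.mp h ▸ hw)
          · refine hloop g hgJ (Or.inr (Or.inr ?_))
            rw [show g = (g + w) - w from by abel]
            exact Set.sub_mem_sub h hw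
          · have hne' : g ≠ g + w := fun he =>
              hS0 ((left_eq_add.mp he) ▸ hw)
            refine hadj g hgJ (g + w) (hIJ h) hne' (Or.inr (Or.inr ?_))
            rw [Set.mem_neg, show -(g - (g + w)) = w from by abel]
            exact hw
        · -- w ∈ I
          have hne' : g ≠ w := fun he => hgI (he ▸ hw)
          rcases h with h | h | h
          · exact hB0 (add_eq_left.mp h ▸ hIB hw)
          · exact hadj g hgJ w (hIJ hw) hne' (Or.inl h)
          · exact hB g hgB w (hIB hw) (hIB h)
      rcases hx with rfl | hx
      · rcases hy with rfl | hy
        · -- both equal (the surviving name is x = g)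
          rcases hz with hz | hz | hz
          · exact hg0 (add_eq_left.mp hz)
          · exact hloop _ hgJ (Or.inl hz)
          · exact hB _ hgB _ hgB (hIB hz)
        · exact key y hy hz
      · rcases hy with rfl | hy
        · rw [add_comm] at hz
          exact key x hx hz
        · -- x, y ∈ S ∪ I
          rcases hz with hz | hz
          · rcases hx with hx | hx <;> rcases hy with hy | hy
            · exact hloop g hgJ (Or.inr (Or.inl (hz ▸ Set.add_mem_add hx hy)))
            · have hne' : g ≠ y := fun h => hgI (h ▸ hy)
              refine hadj g hgJ y (hIJ hy) hne' (Or.inr (Or.inl ?_))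
              rw [show g - y = x from by rw [← hz]; abel]
              exact hx
            · have hne' : g ≠ x := fun h => hgI (h ▸ hx)
              refine hadj g hgJ x (hIJ hx) hne' (Or.inr (Or.inl ?_))
              rw [show g - x = y from by rw [← hz]; abel]
              exact hy
            · exact hB x (hIB hx) y (hIB hy) (hz ▸ hgB)
          · exact hSF x hx y hy hz
    have heq := hmax _ hA (Set.subset_insert _ _)
    have hmem : g ∈ S ∪ I := heq ▸ Set.mem_insert g _
    rcases hmem with h | h
    · exact hgS h
    · exact hgI h
end
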